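/- Hölder-class MSE bound: if g ∈ G(C, x, α), i.e., |g(x + δy) - g(x)| ≤ Cδ^α for all ‖y‖ ≤ 1 and 0 ≤ δ ≤ 1, and the kernel K is nonincreasing, supported on [0,c] with K(0) > 0, then on the event N₁ := ∑ᵢ K(‖x - X_i‖/h) > 0 and for ch ≤ 1, E[(ĝ(x) - g(x))² | X₁,…,X_n] ≤ C²(ch)^{2α} + σ²K(0)/N₁. -/

import Mathlib

/-!
The error `ĝ(x) - g(x)` is the sum of the deterministic bias `b`, the kernel-weighted average of
`g(Xᵢ) - g(x)`, and the centred noise `∑ wᵢ εᵢ` with weights `wᵢ = Kᵢ / N₁` summing to one. Since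
`K` vanishes beyond `c`, only design points within distance `ch` of `x` carry weight, so the
Hölder condition gives `|b| ≤ C (ch)^α`. By independence the noise has variance
`σ² ∑ wᵢ² ≤ σ² maxᵢ wᵢ ≤ σ² K(0) / N₁`, and the mean squared error is `b²` plus that variance.
-/

open MeasureTheory ProbabilityTheory Finset

/-- The class `G(C, x, α)` of functions that are `α`-Hölder at `x` with constant `C`. -/
def holderClassAt {H : Type*} [NormedAddCommGroup H] [NormedSpace ℝ H] (C : ℝ) (x : H)
    (α : ℝ) : Set (H → ℝ) :=
  {g | ∀ y : H, ‖y‖ ≤ 1 → ∀ δ : ℝ, 0 ≤ δ → δ ≤ 1 → |g (x + δ • y) - g x| ≤ C * δ ^ α}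

theorem abs_sub_le_of_mem_holderClassAt {H : Type*} [NormedAddCommGroup H] [NormedSpace ℝ H]
    {g : H → ℝ} {x z : H} {C α r : ℝ} (hg : g ∈ holderClassAt C x α) (hr : 0 < r) (hr1 : r ≤ 1)
    (hz : ‖z - x‖ ≤ r) : |g z - g x| ≤ C * r ^ α := by
  have hy : ‖r⁻¹ • (z - x)‖ ≤ 1 := by
    rw [norm_smul, norm_inv, Real.norm_of_nonneg hr.le]
    exact inv_mul_le_one_of_le₀ hz hr.le
  simpa [smul_smul, mul_inv_cancel₀ hr.ne'] using hg _ hy r hr.le hr1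

theorem norm_sub_le_of_kernel_ne_zero {H : Type*} [NormedAddCommGroup H] {K : ℝ → ℝ}
    {x z : H} {c h : ℝ} (hKsupp : ∀ t : ℝ, c < t → K t = 0) (hh : 0 < h)
    (hK : K (‖x - z‖ / h) ≠ 0) : ‖z - x‖ ≤ c * h := by
  have hle : ‖x - z‖ / h ≤ c := not_lt.mp fun hlt => hK (hKsupp _ hlt)
  rwa [div_le_iff₀ hh, norm_sub_rev] at hle

section WeightedSum

variable {ι : Type*} [Fintype ι]

theorem abs_sum_mul_div_sum_sub_le {w a : ι → ℝ} {a₀ B : ℝ} (hw : ∀ i, 0 ≤ w i)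
    (hpos : 0 < ∑ i, w i) (hB : ∀ i, w i ≠ 0 → |a i - a₀| ≤ B) :
    |(∑ i, a i * w i) / ∑ i, w i - a₀| ≤ B := by
  have hcentre : (∑ i, a i * w i) / ∑ i, w i - a₀ = (∑ i, (a i - a₀) * w i) / ∑ i, w i := by
    simp only [sub_mul, sum_sub_distrib, ← mul_sum, sub_div, mul_div_cancel_right₀ _ hpos.ne']
  rw [hcentre, abs_div, abs_of_pos hpos, div_le_iff₀ hpos, mul_sum]
  calc |∑ i, (a i - a₀) * w i| ≤ ∑ i, |a i - a₀| * w i := by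
        simpa only [abs_mul, abs_of_nonneg (hw _)] using
          abs_sum_le_sum_abs (fun i => (a i - a₀) * w i) univ
    _ ≤ ∑ i, B * w i := sum_le_sum fun i _ => by
        rcases eq_or_ne (w i) 0 with h0 | h0
        · simp [h0]
        · exact mul_le_mul_of_nonneg_right (hB i h0) (hw i)

theorem sum_sq_le_mul_sum {w : ι → ℝ} {M : ℝ} (hw : ∀ i, 0 ≤ w i) (hwM : ∀ i, w i ≤ M) :
    ∑ i, w i ^ 2 ≤ M * ∑ i, w i := by
  rw [mul_sum]
  exact sum_le_sum fun i _ => by rw [sq]; exact mul_le_mul_of_nonneg_right (hwM i) (hw i)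

variable {Ω : Type*} [MeasurableSpace Ω] {μ : Measure Ω} {ε : ι → Ω → ℝ}

theorem memLp_sum_mul (hL2 : ∀ i, MemLp (ε i) 2 μ) (w : ι → ℝ) :
    MemLp (fun ω => ∑ i, w i * ε i ω) 2 μ :=
  memLp_finsetSum _ fun i _ => (hL2 i).const_mul (w i)

theorem integral_sum_mul_eq_zero (hL1 : ∀ i, Integrable (ε i) μ)
    (hmean : ∀ i, ∫ ω, ε i ω ∂μ = 0) (w : ι → ℝ) : ∫ ω, ∑ i, w i * ε i ω ∂μ = 0 := by
  rw [integral_finsetSum _ fun i _ => (hL1 i).const_mul (w i)]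
  simp [integral_const_mul, hmean]

theorem variance_sum_mul (hind : iIndepFun ε μ) (hL2 : ∀ i, MemLp (ε i) 2 μ) (w : ι → ℝ) :
    variance (fun ω => ∑ i, w i * ε i ω) μ = ∑ i, w i ^ 2 * variance (ε i) μ := by
  have hpair : Set.Pairwise ↑(univ : Finset ι)
      fun i j => IndepFun (w i • ε i) (w j • ε j) μ := fun i _ j _ hij =>
    (hind.indepFun hij).comp (measurable_const_mul (w i)) (measurable_const_mul (w j))
  have hsum := IndepFun.variance_sum (fun i _ => (hL2 i).const_smul (w i)) hpair
  simp only [variance_smul] at hsum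
  rw [← hsum]
  congr 1
  ext ω
  simp

end WeightedSum

theorem integral_sq_const_add {Ω : Type*} [MeasurableSpace Ω] {μ : Measure Ω}
    [IsProbabilityMeasure μ] {T : Ω → ℝ} (hT : MemLp T 2 μ) (hmean : ∫ ω, T ω ∂μ = 0) (b : ℝ) :
    ∫ ω, (b + T ω) ^ 2 ∂μ = b ^ 2 + variance T μ := by
  have hvar := variance_eq_sub hT
  have hsq : ∫ ω, (b + T ω) ^ 2 ∂μ = b ^ 2 + 2 * b * ∫ ω, T ω ∂μ + ∫ ω, T ω ^ 2 ∂μ := by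
    have hT1 := hT.integrable one_le_two
    simp only [add_sq]
    rw [integral_add (f := fun ω => b ^ 2 + 2 * b * T ω)
        ((integrable_const _).add (hT1.const_mul _)) hT.integrable_sq,
      integral_add (integrable_const _) (hT1.const_mul _), integral_const, integral_const_mul]
    simp
  simp only [hsq, hvar, hmean, Pi.pow_apply]
  ring

theorem stmt_15_general {Ω : Type*} [MeasurableSpace Ω] (μ : Measure Ω) [IsProbabilityMeasure μ]
    {H : Type*} [NormedAddCommGroup H] [NormedSpace ℝ H]
    (n : ℕ) (X : Fin n → H) (x : H) (g : H → ℝ) (K : ℝ → ℝ) (C c h α σ : ℝ)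
    (hc : 0 < c) (hh : 0 < h)
    (hch : c * h ≤ 1)
    (hg : ∀ y : H, ‖y‖ ≤ 1 → ∀ δ : ℝ, 0 ≤ δ → δ ≤ 1 → |g (x + δ • y) - g x| ≤ C * δ ^ α)
    (hKnonneg : ∀ t : ℝ, 0 ≤ K t)
    (hKmono : ∀ s t : ℝ, 0 ≤ s → s ≤ t → K t ≤ K s)
    (hKsupp : ∀ t : ℝ, c < t → K t = 0)
    (ε : Fin n → Ω → ℝ)
    (hind : iIndepFun ε μ)
    (hL2 : ∀ i, MemLp (ε i) 2 μ)
    (hmean : ∀ i, ∫ ω, ε i ω ∂μ = 0)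
    (hvar : ∀ i, variance (ε i) μ = σ ^ 2)
    (Kx : Fin n → ℝ) (hKx : ∀ i, Kx i = K (‖x - X i‖ / h))
    (hpos : 0 < ∑ i, Kx i) :
    ∫ ω, ((∑ i, (g (X i) + ε i ω) * Kx i) / (∑ i, Kx i) - g x) ^ 2 ∂μ ≤
      C ^ 2 * (c * h) ^ (2 * α) + σ ^ 2 * K 0 / ∑ i, Kx i := by
  set N := ∑ i, Kx i
  have hKx_nonneg (i : Fin n) : 0 ≤ Kx i := hKx i ▸ hKnonneg _
  have hKx_le (i : Fin n) : Kx i ≤ K 0 := hKx i ▸ hKmono 0 _ le_rfl (by positivity)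
  set b := (∑ i, g (X i) * Kx i) / N - g x
  have hbias : |b| ≤ C * (c * h) ^ α :=
    abs_sum_mul_div_sum_sub_le hKx_nonneg hpos fun i hi =>
      abs_sub_le_of_mem_holderClassAt hg (mul_pos hc hh) hch
        (norm_sub_le_of_kernel_ne_zero hKsupp hh (hKx i ▸ hi))
  have herr (ω : Ω) : (∑ i, (g (X i) + ε i ω) * Kx i) / N - g x = b + ∑ i, Kx i / N * ε i ω := by
    simp only [b, add_mul, sum_add_distrib, add_div, sum_div, div_mul_eq_mul_div,
      mul_comm (ε _ ω)]
    ring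
  have hnoise : variance (fun ω => ∑ i, Kx i / N * ε i ω) μ ≤ σ ^ 2 * K 0 / N := by
    have hweights := sum_sq_le_mul_sum (M := K 0 / N) (fun i => div_nonneg (hKx_nonneg i) hpos.le)
      fun i => div_le_div_of_nonneg_right (hKx_le i) hpos.le
    rw [← sum_div, div_self hpos.ne', mul_one] at hweights
    simp only [variance_sum_mul hind hL2, hvar, ← sum_mul]
    calc (∑ i, (Kx i / N) ^ 2) * σ ^ 2 ≤ K 0 / N * σ ^ 2 := by gcongr
      _ = σ ^ 2 * K 0 / N := by ring
  have hbias_sq : b ^ 2 ≤ C ^ 2 * (c * h) ^ (2 * α) := by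
    rw [show 2 * α = α * (2 : ℕ) by push_cast; ring, Real.rpow_mul_natCast (mul_pos hc hh).le,
      ← mul_pow, ← sq_abs]
    exact pow_le_pow_left₀ (abs_nonneg b) hbias 2
  simp only [herr]
  rw [integral_sq_const_add (memLp_sum_mul hL2 _)
    (integral_sum_mul_eq_zero (fun i => (hL2 i).integrable one_le_two) hmean _)]
  exact add_le_add hbias_sq hnoise

/-- Hölder-class MSE bound: if `g ∈ G(C,x,α)`, i.e. `|g(x + δy) - g(x)| ≤ C δ^α` for all
`‖y‖ ≤ 1` and `0 ≤ δ ≤ 1`, the kernel `K` is nonincreasing, nonnegative, supported on `[0,c]`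
with `K(0) > 0`, and (conditionally on the predictors, held fixed) the errors are
independent, mean zero, with variance `σ²`, then on the event `N₁ = ∑ᵢ Kᵢ(x) > 0`, for
`ch ≤ 1`, the conditional mean squared error satisfies
`E[(ĝ(x) - g(x))²] ≤ C²(ch)^{2α} + σ² K(0)/N₁`. -/
theorem stmt_15 {Ω : Type*} [MeasurableSpace Ω] (μ : Measure Ω) [IsProbabilityMeasure μ]
    {H : Type*} [NormedAddCommGroup H] [NormedSpace ℝ H]
    (n : ℕ) (X : Fin n → H) (x : H) (g : H → ℝ) (K : ℝ → ℝ) (C c h α σ : ℝ)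
    (hC : 0 < C) (hc : 0 < c) (hh : 0 < h) (hα0 : 0 < α) (hα1 : α ≤ 1)
    (hch : c * h ≤ 1)
    (hg : ∀ y : H, ‖y‖ ≤ 1 → ∀ δ : ℝ, 0 ≤ δ → δ ≤ 1 → |g (x + δ • y) - g x| ≤ C * δ ^ α)
    (hKnonneg : ∀ t : ℝ, 0 ≤ K t)
    (hKmono : ∀ s t : ℝ, 0 ≤ s → s ≤ t → K t ≤ K s)
    (hKsupp : ∀ t : ℝ, c < t → K t = 0)
    (hK0 : 0 < K 0)
    (ε : Fin n → Ω → ℝ)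
    (hmeas : ∀ i, Measurable (ε i))
    (hind : iIndepFun ε μ)
    (hL2 : ∀ i, MemLp (ε i) 2 μ)
    (hmean : ∀ i, ∫ ω, ε i ω ∂μ = 0)
    (hvar : ∀ i, variance (ε i) μ = σ ^ 2)
    (Kx : Fin n → ℝ) (hKx : ∀ i, Kx i = K (‖x - X i‖ / h))
    (hpos : 0 < ∑ i, Kx i) :
    ∫ ω, ((∑ i, (g (X i) + ε i ω) * Kx i) / (∑ i, Kx i) - g x) ^ 2 ∂μ ≤
      C ^ 2 * (c * h) ^ (2 * α) + σ ^ 2 * K 0 / ∑ i, Kx i :=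
  stmt_15_general μ n X x g K C c h α σ hc hh hch hg hKnonneg hKmono hKsupp ε hind hL2 hmean hvar Kx
    hKx hpos
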